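/- (Greedy Move) Let G=(V,E_L,E_R) be an achievement positional game in which no edge of E_L∪E_R has size 1, and suppose there is a blue edge {u,v}∈E_L such that for every edge e∈E_L∪E_R, u∈e implies v∈e. Then starting by picking v is an optimal first move for Left: if Left has a winning (resp. non-losing) strategy on G as first player, then Left has a winning (resp. non-losing) strategy on G as first player whose first move is to pick v. (In particular o(G) ≤_L o(G_v^u), where G_v^u is the updated game after Left picks v and Right makes the forced answer u.) -/

import Mathlib

namespace APG

/-- The two players: Left and Right. -/
inductive Player : Type
  | L : Player
  | R : Player
deriving DecidableEq, Repr

/-- The opponent of a player. -/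
def Player.other : Player → Player
  | .L => .R
  | .R => .L

/-- An achievement positional game: a finite vertex set together with the set of
blue edges (Left's winning sets) and the set of red edges (Right's winning sets). -/
structure Game : Type where
  V : Finset ℕ
  EL : Finset (Finset ℕ)
  ER : Finset (Finset ℕ)

/-- The edges are nonempty subsets of the vertex set. -/
def WellFormed (G : Game) : Prop :=
  (∀ e ∈ G.EL, e ⊆ G.V ∧ e.Nonempty) ∧ (∀ e ∈ G.ER, e ⊆ G.V ∧ e.Nonempty)

/-- The winning sets of a given player. -/
def Game.edges (G : Game) : Player → Finset (Finset ℕ)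
  | .L => G.EL
  | .R => G.ER

/-- The player who makes the `i`-th move (0-indexed) when `s` moves first. -/
def mover (s : Player) (i : ℕ) : Player := if i % 2 = 0 then s else s.other

/-- The set of vertices picked by player `p` along the history `h`
(the chronological list of the moves played so far), when `s` moved first. -/
def picked (s p : Player) (h : List ℕ) : Finset ℕ :=
  ((Finset.range h.length).filter fun i => mover s i = p).image fun i => h.getD i 0

/-- The set `S` of picked vertices fills some edge of `E`. -/
def fills (E : Finset (Finset ℕ)) (S : Finset ℕ) : Prop := ∃ e ∈ E, e ⊆ S

/-- The game is over: some player has picked all the vertices of one of their edges. -/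
def ended (G : Game) (s : Player) (h : List ℕ) : Prop :=
  fills G.EL (picked s .L h) ∨ fills G.ER (picked s .R h)

/-- `h` is a legal history: no vertex is picked twice, every picked vertex belongs to
the board, and no move is made after the game has ended. -/
def ValidHist (G : Game) (s : Player) (h : List ℕ) : Prop :=
  h.Nodup ∧ (∀ x ∈ h, x ∈ G.V) ∧ ∀ k, k < h.length → ¬ ended G s (h.take k)

/-- A strategy: a map assigning to each position (history) a vertex to pick. -/
abbrev Strategy := List ℕ → ℕ

/-- Along `h`, every move of player `p` agrees with the strategy `σ`. -/
def Follows (s p : Player) (σ : Strategy) (h : List ℕ) : Prop :=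
  ∀ k, k < h.length → mover s k = p → h.getD k 0 = σ (h.take k)

/-- A finished play: either the game has ended or all vertices have been picked. -/
def Complete (G : Game) (s : Player) (h : List ℕ) : Prop :=
  ended G s h ∨ h.length = G.V.card

/-- The strategy `σ` of player `p` always suggests a legal move (an unpicked vertex)
whenever the game is not over and it is `p`'s turn. -/
def Legal (G : Game) (s p : Player) (σ : Strategy) : Prop :=
  ∀ h, ValidHist G s h → Follows s p σ h → ¬ ended G s h → h.length < G.V.card →
    mover s h.length = p → σ h ∈ G.V ∧ σ h ∉ h

/-- Player `p` has a winning strategy on `G` when `s` moves first: following it,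
every finished play ends with `p` having filled one of their edges (and, the game
having ended right there, the opponent has not filled an edge first). -/
def WinsAs (G : Game) (s p : Player) : Prop :=
  ∃ σ : Strategy, Legal G s p σ ∧
    ∀ h, ValidHist G s h → Follows s p σ h → Complete G s h →
      fills (G.edges p) (picked s p h)

/-- Player `p` has a non-losing strategy on `G` when `s` moves first: following it,
the opponent never fills one of their edges. -/
def NonLosingAs (G : Game) (s p : Player) : Prop :=
  ∃ σ : Strategy, Legal G s p σ ∧
    ∀ h, ValidHist G s h → Follows s p σ h → Complete G s h →
      ¬ fills (G.edges p.other) (picked s p.other h)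

/-- The possible results of the game, for a fixed starting player. -/
inductive Result : Type
  | Lwin : Result
  | draw : Result
  | Rwin : Result
deriving DecidableEq, Repr

/-- The result of `G` with optimal play, when `s` moves first, is `r`:
a win for a player means that player has a winning strategy, a draw means
both players have non-losing strategies. -/
def resultIs (G : Game) (s : Player) : Result → Prop
  | .Lwin => WinsAs G s .L
  | .Rwin => WinsAs G s .R
  | .draw => NonLosingAs G s .L ∧ NonLosingAs G s .R

/-- An outcome: the pair of results with optimal play
(when Left starts, when Right starts). -/
abbrev Outcome := Result × Result

/-- `G` has outcome `o`. -/
def hasOutcome (G : Game) (o : Outcome) : Prop :=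
  resultIs G .L o.1 ∧ resultIs G .R o.2

/-- Numerical value of a result, from Left's point of view:
Right wins < draw < Left wins. -/
def Result.val : Result → ℕ
  | .Rwin => 0
  | .draw => 1
  | .Lwin => 2

/-- The partial order `≤_L` on outcomes, comparing both components simultaneously
from Left's point of view. -/
def outLE (o o' : Outcome) : Prop := o.1.val ≤ o'.1.val ∧ o.2.val ≤ o'.2.val

def oL : Outcome := (.Lwin, .Lwin)
def oLminus : Outcome := (.Lwin, .draw)
def oN : Outcome := (.Lwin, .Rwin)
def oD : Outcome := (.draw, .draw)
def oRminus : Outcome := (.draw, .Rwin)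
def oR : Outcome := (.Rwin, .Rwin)

/-- The updated game `G_u` after Left has picked `u`. -/
def subL (G : Game) (u : ℕ) : Game where
  V := G.V.erase u
  EL := G.EL.image fun e => e.erase u
  ER := G.ER.filter fun e => u ∉ e

/-- The updated game `G^u` after Right has picked `u`. -/
def subR (G : Game) (u : ℕ) : Game where
  V := G.V.erase u
  EL := G.EL.filter fun e => u ∉ e
  ER := G.ER.image fun e => e.erase u

/-- The updated game `G_u^v` after Left has picked `u` and Right has picked `v`. -/
def updLR (G : Game) (u v : ℕ) : Game where
  V := (G.V.erase u).erase v
  EL := (G.EL.filter fun e => v ∉ e).image fun e => e.erase u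
  ER := (G.ER.filter fun e => u ∉ e).image fun e => e.erase v

/-- The disjoint union of two games. -/
def gunion (G G' : Game) : Game where
  V := G.V ∪ G'.V
  EL := G.EL ∪ G'.EL
  ER := G.ER ∪ G'.ER

/-!
Compare minimax values. Since every edge through `u` also contains `v`, a position in which
Left holds `v` and Right holds `u` is at least as good for Left as any position with `u` and
`v` still free: if Left picks `u`, Right answers `v`, and owning `v` instead of `u` (while
Right owns `u` instead of `v`) can only help Left; if Left picks `v`, Right answers `u`; all
other moves are mirrored. After Left picks `v`, Right must answer `u` or lose to the blue edge
`{u, v}`, so the first move `v` loses nothing, and the position after `v` and `u` is exactly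
the updated game `G_v^u`. Finally, the results of optimal play are the minimax values: a
strategy that always picks a value-preserving move secures the value for either player.
-/

open Finset

instance (E : Finset (Finset ℕ)) (S : Finset ℕ) : Decidable (fills E S) :=
  inferInstanceAs (Decidable (∃ e ∈ E, e ⊆ S))

lemma fills_mono {E : Finset (Finset ℕ)} {S T : Finset ℕ} (h : fills E S) (hST : S ⊆ T) :
    fills E T :=
  let ⟨e, he, heS⟩ := h
  ⟨e, he, heS.trans hST⟩

lemma fills_of_fills_insert {E : Finset (Finset ℕ)} {S : Finset ℕ} {u v : ℕ} (huv : u ≠ v)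
    (hdom : ∀ e ∈ E, u ∈ e → v ∈ e) (hvS : v ∉ S) (h : fills E (insert u S)) :
    fills E S := by
  obtain ⟨e, he, heS⟩ := h
  have hue : u ∉ e := fun hue => by
    rcases mem_insert.mp (heS (hdom e he hue)) with h | h
    exacts [huv h.symm, hvS h]
  exact ⟨e, he, fun x hx => (mem_insert.mp (heS hx)).resolve_left fun h => hue (h ▸ hx)⟩

lemma not_fills_of_card_le_one {E : Finset (Finset ℕ)} {S : Finset ℕ}
    (hE : ∀ e ∈ E, 2 ≤ e.card) (hS : S.card ≤ 1) : ¬ fills E S := fun ⟨e, he, heS⟩ => by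
  have := card_le_card heS
  have := hE e he
  omega

/-! ### The minimax value of a position

A position is the pair `(A, B)` of the sets picked so far by Left and by Right. Results are
encoded as in `Result.val`: `2` a win for Left, `1` a draw, `0` a win for Right. -/

def free (H : Game) (A B : Finset ℕ) : Finset ℕ := H.V \ (A ∪ B)

section Value
variable {H : Game} {p : Player} {A B : Finset ℕ} {x : ℕ}

@[simp]
lemma mem_free :
    x ∈ free H A B ↔ x ∈ H.V ∧ x ∉ A ∧ x ∉ B := by
  simp [free]

lemma free_insert_left :
    free H (insert x A) B = (free H A B).erase x := by
  rw [free, insert_union, sdiff_insert, free]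

lemma free_insert_right :
    free H A (insert x B) = (free H A B).erase x := by
  rw [free, union_insert, sdiff_insert, free]

lemma free_insert_insert {a b : ℕ} :
    free H (insert a A) (insert b B) = ((free H A B).erase b).erase a := by
  rw [free_insert_left, free_insert_right]

/-- Checking Left first is harmless: on a legal play the two players never both hold a
filled edge (`ValidHist.not_fills_both`). -/
def score (H : Game) (A B : Finset ℕ) : ℕ :=
  if fills H.EL A then 2 else if fills H.ER B then 0 else 1

lemma score_le_two : score H A B ≤ 2 := by
  unfold score; split_ifs <;> omega

lemma score_eq_one_iff :
    score H A B = 1 ↔ ¬ fills H.EL A ∧ ¬ fills H.ER B := by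
  unfold score; split_ifs <;> simp_all

lemma score_le_score {H' : Game} {A' B' : Finset ℕ}
    (hL : fills H.EL A → fills H'.EL A') (hR : fills H'.ER B' → fills H.ER B) :
    score H A B ≤ score H' A' B' := by
  unfold score; split_ifs <;> simp_all

/-- Minimax with fuel; `val` supplies the number of free vertices, which bounds the length of
the remaining play. -/
def valAux (H : Game) : ℕ → Player → Finset ℕ → Finset ℕ → ℕ
  | 0, _, A, B => score H A B
  | n + 1, p, A, B =>
    if h : score H A B = 1 ∧ (free H A B).Nonempty then
      match p with
      | .L => (free H A B).sup' h.2 fun x => valAux H n .R (insert x A) B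
      | .R => (free H A B).inf' h.2 fun x => valAux H n .L A (insert x B)
    else score H A B

def val (H : Game) (p : Player) (A B : Finset ℕ) : ℕ := valAux H (free H A B).card p A B

lemma val_of_score_ne_one (hs : score H A B ≠ 1) :
    val H p A B = score H A B := by
  unfold val; cases (free H A B).card <;> simp [valAux, hs]

lemma val_of_free_eq_empty (hf : free H A B = ∅) :
    val H p A B = score H A B := by
  unfold val; rw [hf]; rfl

lemma val_le_two : val H p A B ≤ 2 := by
  unfold val
  induction (free H A B).card generalizing p A B with
  | zero => exact score_le_two
  | succ n ih =>
    unfold valAux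
    split
    · cases p
      · exact sup'_le _ _ fun x _ => ih ..
      · obtain ⟨x, hx⟩ := ‹_ ∧ _›.2
        exact inf'_le_of_le _ hx (ih ..)
    · exact score_le_two

lemma val_L_eq_sup' (hs : score H A B = 1)
    (hf : (free H A B).Nonempty) :
    val H .L A B = (free H A B).sup' hf fun x => val H .R (insert x A) B := by
  obtain ⟨n, hn⟩ : ∃ n, (free H A B).card = n + 1 :=
    Nat.exists_eq_add_one.mpr (card_pos.mpr hf)
  rw [val, hn, valAux, dif_pos ⟨hs, hf⟩]
  refine sup'_congr _ rfl fun x hx => ?_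
  rw [val, free_insert_left, card_erase_of_mem hx, hn, Nat.add_sub_cancel]

lemma val_R_eq_inf' (hs : score H A B = 1)
    (hf : (free H A B).Nonempty) :
    val H .R A B = (free H A B).inf' hf fun x => val H .L A (insert x B) := by
  obtain ⟨n, hn⟩ : ∃ n, (free H A B).card = n + 1 :=
    Nat.exists_eq_add_one.mpr (card_pos.mpr hf)
  rw [val, hn, valAux, dif_pos ⟨hs, hf⟩]
  refine inf'_congr _ rfl fun x hx => ?_
  rw [val, free_insert_right, card_erase_of_mem hx, hn, Nat.add_sub_cancel]

lemma le_val_L (hs : score H A B = 1)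
    (hx : x ∈ free H A B) : val H .R (insert x A) B ≤ val H .L A B := by
  rw [val_L_eq_sup' hs ⟨x, hx⟩]
  exact le_sup' (fun y => val H .R (insert y A) B) hx

lemma val_R_le (hs : score H A B = 1)
    (hx : x ∈ free H A B) : val H .R A B ≤ val H .L A (insert x B) := by
  rw [val_R_eq_inf' hs ⟨x, hx⟩]
  exact inf'_le (fun y => val H .L A (insert y B)) hx

lemma exists_val_L_eq (hs : score H A B = 1)
    (hf : (free H A B).Nonempty) :
    ∃ x ∈ free H A B, val H .R (insert x A) B = val H .L A B := by
  obtain ⟨x, hx, heq⟩ := exists_mem_eq_sup' hf fun y => val H .R (insert y A) B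
  exact ⟨x, hx, by rw [val_L_eq_sup' hs hf, heq]⟩

lemma exists_val_R_eq (hs : score H A B = 1)
    (hf : (free H A B).Nonempty) :
    ∃ x ∈ free H A B, val H .L A (insert x B) = val H .R A B := by
  obtain ⟨x, hx, heq⟩ := exists_mem_eq_inf' hf fun y => val H .L A (insert y B)
  exact ⟨x, hx, by rw [val_R_eq_inf' hs hf, heq]⟩

lemma val_le_val_of_score_le {H' : Game} {A' B' : Finset ℕ} (p q : Player)
    (hle : score H A B ≤ score H' A' B') (hs : ¬ (score H A B = 1 ∧ score H' A' B' = 1)) :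
    val H p A B ≤ val H' q A' B' := by
  have : val H p A B ≤ 2 := val_le_two
  have : score H' A' B' ≤ 2 := score_le_two
  by_cases h : score H A B = 1
  · rw [val_of_score_ne_one (p := q) fun h' => hs ⟨h, h'⟩]
    omega
  · rw [val_of_score_ne_one h]
    by_cases h' : score H' A' B' = 1
    · omega
    · rw [val_of_score_ne_one h']
      exact hle

/-- The value only depends on the free vertices and on the scores of the positions reachable
from `(A, B)`. -/
theorem val_mono {H' : Game} {A' B' : Finset ℕ} (hfree : free H A B = free H' A' B')
    (hscore : ∀ C ⊆ free H A B, ∀ D ⊆ free H A B,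
      score H (A ∪ C) (B ∪ D) ≤ score H' (A' ∪ C) (B' ∪ D)) (p : Player) :
    val H p A B ≤ val H' p A' B' := by
  obtain ⟨n, hn⟩ : ∃ n, (free H A B).card = n := ⟨_, rfl⟩
  induction n generalizing p A B A' B' with
  | zero =>
    have hf := card_eq_zero.mp hn
    rw [val_of_free_eq_empty hf, val_of_free_eq_empty (hfree ▸ hf)]
    simpa using hscore ∅ (empty_subset _) ∅ (empty_subset _)
  | succ n ih =>
    have h0 := hscore ∅ (empty_subset _) ∅ (empty_subset _)
    simp only [union_empty] at h0
    by_cases hs : score H A B = 1 ∧ score H' A' B' = 1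
    swap
    · exact val_le_val_of_score_le p p h0 hs
    have hf : (free H A B).Nonempty := card_pos.mp (by omega)
    have hf' : (free H' A' B').Nonempty := hfree ▸ hf
    have hcard : ∀ x ∈ free H A B, ((free H A B).erase x).card = n := fun x hx => by
      rw [card_erase_of_mem hx, hn, Nat.add_sub_cancel]
    cases p
    · rw [val_L_eq_sup' hs.1 hf, val_L_eq_sup' hs.2 hf']
      refine sup'_le _ _ fun x hx => le_sup'_of_le _ (hfree ▸ hx) (ih (p := .R) ?_ ?_ ?_)
      · rw [free_insert_left, free_insert_left, hfree]
      · intro C hC D hD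
        rw [free_insert_left] at hC hD
        simpa only [insert_union, ← union_insert] using
          hscore _ (insert_subset hx (hC.trans (erase_subset _ _))) D (hD.trans (erase_subset _ _))
      · rw [free_insert_left, hcard x hx]
    · rw [val_R_eq_inf' hs.1 hf, val_R_eq_inf' hs.2 hf']
      refine le_inf' _ _ fun x hx' => ?_
      have hx : x ∈ free H A B := hfree ▸ hx'
      refine inf'_le_of_le _ hx (ih (p := .L) ?_ ?_ ?_)
      · rw [free_insert_right, free_insert_right, hfree]
      · intro C hC D hD
        rw [free_insert_right] at hC hD
        simpa only [insert_union, ← union_insert] using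
          hscore C (hC.trans (erase_subset _ _)) _ (insert_subset hx (hD.trans (erase_subset _ _)))
      · rw [free_insert_right, hcard x hx]

lemma val_eq_val {H' : Game} {A' B' : Finset ℕ} (hfree : free H A B = free H' A' B')
    (hscore : ∀ C ⊆ free H A B, ∀ D ⊆ free H A B,
      score H (A ∪ C) (B ∪ D) = score H' (A' ∪ C) (B' ∪ D)) (p : Player) :
    val H p A B = val H' p A' B' :=
  le_antisymm (val_mono hfree (fun C hC D hD => (hscore C hC D hD).le) p)
    (val_mono hfree.symm (fun C hC D hD => (hscore C (hfree ▸ hC) D (hfree ▸ hD)).ge) p)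

end Value

section UpdLR
variable {G : Game} {a b : ℕ}

lemma fills_updLR_EL_iff (hab : a ≠ b) {S : Finset ℕ} (hbS : b ∉ S) :
    fills (updLR G a b).EL S ↔ fills G.EL (insert a S) := by
  simp only [fills, updLR, mem_image, mem_filter, exists_exists_and_eq_and, ← subset_insert_iff]
  refine ⟨fun ⟨e, ⟨he, _⟩, heS⟩ => ⟨e, he, heS⟩,
    fun ⟨e, he, heS⟩ => ⟨e, ⟨he, fun hbe => ?_⟩, heS⟩⟩
  rcases mem_insert.mp (heS hbe) with h | h
  exacts [hab h.symm, hbS h]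

lemma fills_updLR_ER_iff (hab : a ≠ b) {S : Finset ℕ} (haS : a ∉ S) :
    fills (updLR G a b).ER S ↔ fills G.ER (insert b S) := by
  simp only [fills, updLR, mem_image, mem_filter, exists_exists_and_eq_and, ← subset_insert_iff]
  refine ⟨fun ⟨e, ⟨he, _⟩, heS⟩ => ⟨e, he, heS⟩,
    fun ⟨e, he, heS⟩ => ⟨e, ⟨he, fun hae => ?_⟩, heS⟩⟩
  rcases mem_insert.mp (heS hae) with h | h
  exacts [hab h, haS h]

lemma score_updLR (hab : a ≠ b) {A B : Finset ℕ} (hbA : b ∉ A) (haB : a ∉ B) :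
    score (updLR G a b) A B = score G (insert a A) (insert b B) := by
  simp only [score, fills_updLR_EL_iff hab hbA, fills_updLR_ER_iff hab haB]

lemma free_updLR (A B : Finset ℕ) :
    free (updLR G a b) A B = free G (insert a A) (insert b B) := by
  ext x
  simp only [mem_free, updLR, mem_erase, mem_insert]
  tauto

theorem val_updLR (hab : a ≠ b) (p : Player) {A B : Finset ℕ} (hbA : b ∉ A) (haB : a ∉ B) :
    val (updLR G a b) p A B = val G p (insert a A) (insert b B) := by
  refine val_eq_val (free_updLR A B) (fun C hC D hD => ?_) p
  have hbC : b ∉ C := fun h => by simpa [updLR] using hC h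
  have haD : a ∉ D := fun h => by simpa [updLR] using hD h
  rw [score_updLR hab (by simp [hbA, hbC]) (by simp [haB, haD]), insert_union, insert_union]

lemma empty_notMem_updLR_ER (h2 : ∀ e ∈ G.ER, 2 ≤ e.card) : ∅ ∉ (updLR G a b).ER := by
  simp only [updLR, mem_image, mem_filter, not_exists, not_and]
  intro e he hempty
  have := h2 e he.1
  rcases (erase_eq_empty_iff _ _).mp hempty with rfl | rfl <;> simp at this

end UpdLR

section Greedy
variable {G : Game} {u v : ℕ}

lemma val_swap_le (huv : u ≠ v) (hdom : ∀ e ∈ G.EL ∪ G.ER, u ∈ e → v ∈ e) (p : Player)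
    {A B : Finset ℕ} (hvA : v ∉ A) (hvB : v ∉ B) :
    val G p (insert u A) (insert v B) ≤ val G p (insert v A) (insert u B) := by
  have hfree : free G (insert u A) (insert v B) = free G (insert v A) (insert u B) := by
    rw [free_insert_insert, free_insert_insert, erase_right_comm]
  refine val_mono hfree (fun C hC D hD => ?_) p
  have hvC : v ∉ C := fun h => by simpa using hC h
  have hvD : v ∉ D := fun h => by simpa using hD h
  simp only [insert_union]
  exact score_le_score
    (fun h => fills_mono (fills_of_fills_insert huv (fun e he => hdom e (mem_union_left _ he))
      (by simp [hvA, hvC]) h) (subset_insert _ _))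
    (fun h => fills_mono (fills_of_fills_insert huv (fun e he => hdom e (mem_union_right _ he))
      (by simp [hvB, hvD]) h) (subset_insert _ _))

/-- Left to move: a move `u` is answered by `v` (then `val_swap_le`), a move `v` by `u`, and any
other move `x` is mirrored by the same move `x` on the right. -/
lemma val_L_le_val_L_insert_insert (huv : u ≠ v) (hdom : ∀ e ∈ G.EL ∪ G.ER, u ∈ e → v ∈ e)
    {A B : Finset ℕ} (hu : u ∈ free G A B) (hv : v ∈ free G A B) (hs : score G A B = 1)
    (hs' : score G (insert v A) (insert u B) = 1)
    (ih : ∀ x ∈ free G (insert v A) (insert u B),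
      val G .R (insert x A) B ≤ val G .R (insert x (insert v A)) (insert u B)) :
    val G .L A B ≤ val G .L (insert v A) (insert u B) := by
  obtain ⟨hA, hB⟩ := score_eq_one_iff.mp hs
  obtain ⟨hA', -⟩ := score_eq_one_iff.mp hs'
  obtain ⟨-, hvA, hvB⟩ := mem_free.mp hv
  rw [val_L_eq_sup' hs ⟨u, hu⟩]
  refine sup'_le _ _ fun x hx => ?_
  by_cases hxu : x = u
  · subst hxu
    have hsx : score G (insert x A) B = 1 := score_eq_one_iff.mpr
      ⟨fun h => hA (fills_of_fills_insert huv (fun e he => hdom e (mem_union_left _ he)) hvA h),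
        hB⟩
    have hvx : v ∈ free G (insert x A) B := by
      rw [free_insert_left]; exact mem_erase.mpr ⟨huv.symm, hv⟩
    exact (val_R_le hsx hvx).trans (val_swap_le huv hdom .L hvA hvB)
  by_cases hxv : x = v
  · subst hxv
    have hux : u ∈ free G (insert x A) B := by
      rw [free_insert_left]; exact mem_erase.mpr ⟨huv, hu⟩
    exact val_R_le (score_eq_one_iff.mpr ⟨hA', hB⟩) hux
  have hxW : x ∈ free G (insert v A) (insert u B) := by
    rw [free_insert_insert]; exact mem_erase.mpr ⟨hxv, mem_erase.mpr ⟨hxu, hx⟩⟩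
  exact (ih x hxW).trans (le_val_L hs' hxW)

/-- Right to move: an optimal reply `y` on the right is mirrored on the left; if there is none,
Right picks `u` on the left and Left is forced to pick `v`. -/
lemma val_R_le_val_R_insert_insert (huv : u ≠ v) {A B : Finset ℕ} (hu : u ∈ free G A B)
    (hv : v ∈ free G A B) (hs : score G A B = 1) (hs' : score G (insert v A) (insert u B) = 1)
    (ih : ∀ y ∈ free G (insert v A) (insert u B),
      val G .L A (insert y B) ≤ val G .L (insert v A) (insert y (insert u B))) :
    val G .R A B ≤ val G .R (insert v A) (insert u B) := by
  by_cases hW : (free G (insert v A) (insert u B)).Nonempty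
  · obtain ⟨y, hy, hyval⟩ := exists_val_R_eq hs' hW
    have hyAB : y ∈ free G A B := by
      rw [free_insert_insert] at hy; exact mem_of_mem_erase (mem_of_mem_erase hy)
    exact hyval ▸ (val_R_le hs hyAB).trans (ih y hy)
  have hsu : score G A (insert u B) = 1 := score_eq_one_iff.mpr
    ⟨(score_eq_one_iff.mp hs).1, (score_eq_one_iff.mp hs').2⟩
  have hvu : v ∈ free G A (insert u B) := by
    rw [free_insert_right]; exact mem_erase.mpr ⟨huv.symm, hv⟩
  refine (val_R_le hs hu).trans ?_
  rw [val_L_eq_sup' hsu ⟨v, hvu⟩]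
  refine sup'_le _ _ fun x hx => ?_
  obtain rfl : x = v := by
    by_contra hxv
    rw [free_insert_left] at hW
    exact hW ⟨x, mem_erase.mpr ⟨hxv, hx⟩⟩
  exact le_rfl

theorem val_le_val_insert_insert (huv : u ≠ v) (hdom : ∀ e ∈ G.EL ∪ G.ER, u ∈ e → v ∈ e)
    (p : Player) {A B : Finset ℕ} (hu : u ∈ free G A B) (hv : v ∈ free G A B) :
    val G p A B ≤ val G p (insert v A) (insert u B) := by
  obtain ⟨n, hn⟩ : ∃ n, (free G (insert v A) (insert u B)).card = n := ⟨_, rfl⟩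
  induction n using Nat.strong_induction_on generalizing p A B with
  | _ n ih =>
  have hle : score G A B ≤ score G (insert v A) (insert u B) :=
    score_le_score (fun h => fills_mono h (subset_insert _ _))
      (fills_of_fills_insert huv (fun e he => hdom e (mem_union_right _ he)) (mem_free.mp hv).2.2)
  by_cases hs : score G A B = 1 ∧ score G (insert v A) (insert u B) = 1
  swap
  · exact val_le_val_of_score_le p p hle hs
  have hnext : ∀ x ∈ free G (insert v A) (insert u B), x ≠ u ∧ x ≠ v ∧
      ((free G (insert v A) (insert u B)).erase x).card < n := fun x hx => by
    have hx' := hx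
    rw [free_insert_insert, mem_erase, mem_erase] at hx'
    exact ⟨hx'.2.1, hx'.1, hn ▸ card_erase_lt_of_mem hx⟩
  cases p
  · refine val_L_le_val_L_insert_insert huv hdom hu hv hs.1 hs.2 fun x hx => ?_
    obtain ⟨hxu, hxv, hlt⟩ := hnext x hx
    rw [insert_comm x v]
    refine ih _ hlt .R ?_ ?_ (by rw [insert_comm, free_insert_left])
    · rw [free_insert_left]; exact mem_erase.mpr ⟨Ne.symm hxu, hu⟩
    · rw [free_insert_left]; exact mem_erase.mpr ⟨Ne.symm hxv, hv⟩
  · refine val_R_le_val_R_insert_insert huv hu hv hs.1 hs.2 fun y hy => ?_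
    obtain ⟨hyu, hyv, hlt⟩ := hnext y hy
    rw [insert_comm y u]
    refine ih _ hlt .L ?_ ?_ (by rw [insert_comm, free_insert_right])
    · rw [free_insert_right]; exact mem_erase.mpr ⟨Ne.symm hyu, hu⟩
    · rw [free_insert_right]; exact mem_erase.mpr ⟨Ne.symm hyv, hv⟩

/-- Right must answer `u`, or Left completes `{u, v}`. -/
theorem val_L_le_val_R_singleton (h2 : ∀ e ∈ G.EL ∪ G.ER, 2 ≤ e.card)
    (he : ({u, v} : Finset ℕ) ∈ G.EL) (huv : u ≠ v) (hu : u ∈ G.V) (hv : v ∈ G.V)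
    (hdom : ∀ e ∈ G.EL ∪ G.ER, u ∈ e → v ∈ e) :
    val G .L ∅ ∅ ≤ val G .R {v} ∅ := by
  have hEL : ∀ e ∈ G.EL, 2 ≤ e.card := fun e he => h2 e (mem_union_left _ he)
  have hER : ∀ e ∈ G.ER, 2 ≤ e.card := fun e he => h2 e (mem_union_right _ he)
  have hs : score G {v} ∅ = 1 := score_eq_one_iff.mpr
    ⟨not_fills_of_card_le_one hEL (by simp), not_fills_of_card_le_one hER (by simp)⟩
  calc val G .L ∅ ∅ ≤ val G .L {v} {u} := by
        simpa using val_le_val_insert_insert huv hdom .L (A := ∅) (B := ∅) (by simpa) (by simpa)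
    _ ≤ val G .R {v} ∅ := by
      rw [val_R_eq_inf' hs ⟨u, by simp [hu, huv]⟩]
      refine le_inf' _ _ fun y hy => ?_
      by_cases hyu : y = u
      · simp [hyu]
      have hsy : score G {v} {y} = 1 := score_eq_one_iff.mpr
        ⟨not_fills_of_card_le_one hEL (by simp), not_fills_of_card_le_one hER (by simp)⟩
      have hwin : score G (insert u {v}) {y} = 2 := if_pos ⟨{u, v}, he, subset_refl _⟩
      calc val G .L {v} {u} ≤ 2 := val_le_two
        _ = val G .R (insert u {v}) {y} := by rw [val_of_score_ne_one (by omega), hwin]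
        _ ≤ val G .L {v} (insert y ∅) := le_val_L hsy (by simp [hu, huv, Ne.symm hyu])

end Greedy

/-! ### Histories -/

lemma Player.other_other (p : Player) : p.other.other = p := by cases p <;> rfl

lemma Player.eq_other_of_ne {p q : Player} (h : q ≠ p) : q = p.other := by
  cases p <;> cases q <;> simp_all [Player.other]

lemma Player.other_ne (p : Player) : p.other ≠ p := by cases p <;> simp [Player.other]

lemma mover_zero (s : Player) : mover s 0 = s := rfl

lemma mover_succ (s : Player) (n : ℕ) : mover s (n + 1) = (mover s n).other := by
  unfold mover
  rcases Nat.mod_two_eq_zero_or_one n with h | h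
  · simp [h, Nat.succ_mod_two_eq_one_iff.mpr h]
  · simp [h, Nat.succ_mod_two_eq_zero_iff.mpr h, Player.other_other]

lemma picked_append_singleton (s p : Player) (h : List ℕ) (x : ℕ) :
    picked s p (h ++ [x]) =
      if mover s h.length = p then insert x (picked s p h) else picked s p h := by
  have hagree : ∀ i ∈ (range h.length).filter fun i => mover s i = p,
      (h ++ [x]).getD i 0 = h.getD i 0 :=
    fun i hi => List.getD_append _ _ _ _ (mem_range.mp (mem_filter.mp hi).1)
  unfold picked
  rw [List.length_append, List.length_singleton, range_add_one, filter_insert]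
  split_ifs
  · rw [image_insert, List.getD_append_right _ _ _ _ le_rfl, image_congr hagree]
    simp
  · exact image_congr hagree

lemma toFinset_eq_picked_union_picked (s : Player) (h : List ℕ) :
    h.toFinset = picked s .L h ∪ picked s .R h := by
  ext x
  simp only [List.mem_toFinset, mem_union, picked, mem_image, mem_filter, mem_range,
    List.mem_iff_getElem]
  constructor
  · rintro ⟨i, hi, rfl⟩
    cases hm : mover s i
    · exact .inl ⟨i, ⟨hi, hm⟩, List.getD_eq_getElem _ _ hi⟩
    · exact .inr ⟨i, ⟨hi, hm⟩, List.getD_eq_getElem _ _ hi⟩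
  · rintro (⟨i, ⟨hi, -⟩, rfl⟩ | ⟨i, ⟨hi, -⟩, rfl⟩) <;>
      exact ⟨i, hi, (List.getD_eq_getElem _ _ hi).symm⟩

section Play
variable {H : Game} {s p : Player} {h : List ℕ} {x : ℕ} {σ : Strategy} {t : ℕ}

@[simp]
lemma mem_free_picked :
    x ∈ free H (picked s .L h) (picked s .R h) ↔ x ∈ H.V ∧ x ∉ h := by
  rw [free, ← toFinset_eq_picked_union_picked, mem_sdiff, List.mem_toFinset]

lemma not_ended_iff :
    ¬ ended H s h ↔ score H (picked s .L h) (picked s .R h) = 1 := by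
  rw [score_eq_one_iff, ended, not_or]

lemma validHist_append_singleton_iff :
    ValidHist H s (h ++ [x]) ↔ ValidHist H s h ∧ ¬ ended H s h ∧ x ∈ H.V ∧ x ∉ h := by
  have htake : ∀ k ≤ h.length, (h ++ [x]).take k = h.take k :=
    fun k hk => List.take_append_of_le_length hk
  simp only [ValidHist, List.nodup_append, List.forall_mem_append, List.length_append,
    List.length_singleton, List.nodup_cons, List.nodup_nil, List.mem_singleton,
    List.not_mem_nil, forall_eq]
  constructor
  · rintro ⟨⟨hnd, -, hx⟩, ⟨hV, hxV⟩, hend⟩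
    refine ⟨⟨hnd, hV, fun k hk => htake k hk.le ▸ hend k (by omega)⟩, ?_, hxV,
      fun hxh => hx x hxh rfl⟩
    simpa [List.take_left] using hend h.length (by omega)
  · rintro ⟨⟨hnd, hV, hend⟩, hendh, hxV, hxh⟩
    refine ⟨⟨hnd, by simp, fun a ha hax => hxh (hax ▸ ha)⟩, ⟨hV, hxV⟩, fun k hk => ?_⟩
    rw [htake k (by omega)]
    rcases Nat.lt_or_ge k h.length with hk' | hk'
    · exact hend k hk'
    · rwa [show k = h.length by omega, List.take_length]

lemma follows_append_singleton_iff :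
    Follows s p σ (h ++ [x]) ↔ Follows s p σ h ∧ (mover s h.length = p → x = σ h) := by
  simp only [Follows, List.length_append, List.length_singleton]
  constructor
  · intro hf
    refine ⟨fun k hk hm => ?_, fun hm => ?_⟩
    · rw [← List.getD_append _ [x] _ _ hk, hf k (by omega) hm,
        List.take_append_of_le_length hk.le]
    · simpa [List.getD_append_right, List.take_left] using hf h.length (by omega) hm
  · rintro ⟨hf, hx⟩ k hk hm
    rcases Nat.lt_or_ge k h.length with hk' | hk'
    · rw [List.getD_append _ _ _ _ hk', List.take_append_of_le_length hk'.le, hf k hk' hm]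
    · obtain rfl : k = h.length := by omega
      simpa [List.getD_append_right, List.take_left] using hx hm

lemma ValidHist.length_le (hv : ValidHist H s h) :
    h.length ≤ H.V.card := by
  rw [← List.toFinset_card_of_nodup hv.1]
  exact card_le_card fun x hx => hv.2.1 x (List.mem_toFinset.mp hx)

lemma ValidHist.free_picked_eq_empty (hv : ValidHist H s h) (hlen : h.length = H.V.card) :
    free H (picked s .L h) (picked s .R h) = ∅ := by
  have hsub : h.toFinset ⊆ H.V := fun x hx => hv.2.1 x (List.mem_toFinset.mp hx)
  have := eq_of_subset_of_card_le hsub (by rw [List.toFinset_card_of_nodup hv.1, hlen])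
  rw [free, ← toFinset_eq_picked_union_picked, this, sdiff_self, bot_eq_empty]

lemma ValidHist.free_picked_nonempty (hv : ValidHist H s h) (hlen : h.length < H.V.card) :
    (free H (picked s .L h) (picked s .R h)).Nonempty := by
  rw [free, ← toFinset_eq_picked_union_picked, ← card_pos,
    card_sdiff_of_subset fun x hx => hv.2.1 x (List.mem_toFinset.mp hx),
    List.toFinset_card_of_nodup hv.1]
  omega

lemma ValidHist.not_fills_both (hER : ∅ ∉ H.ER) (hv : ValidHist H s h) :
    ¬ (fills H.EL (picked s .L h) ∧ fills H.ER (picked s .R h)) := by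
  rintro ⟨hL, hR⟩
  rcases List.eq_nil_or_concat h with rfl | ⟨h, x, rfl⟩
  · obtain ⟨e, he, hsub⟩ := hR
    exact hER (subset_empty.mp hsub ▸ he)
  · rw [List.concat_eq_append, picked_append_singleton] at hL hR
    rw [List.concat_eq_append, validHist_append_singleton_iff, ended] at hv
    cases hm : mover s h.length
    · exact hv.2.1 (.inr (by simpa [hm] using hR))
    · exact hv.2.1 (.inl (by simpa [hm] using hL))

/-! ### Strategies that secure a value -/

def valAt (H : Game) (s : Player) (h : List ℕ) : ℕ :=
  val H (mover s h.length) (picked s .L h) (picked s .R h)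

lemma valAt_append_singleton_of_L (hm : mover s h.length = .L) :
    valAt H s (h ++ [x]) = val H .R (insert x (picked s .L h)) (picked s .R h) := by
  simp [valAt, mover_succ, hm, picked_append_singleton, Player.other]

lemma valAt_append_singleton_of_R (hm : mover s h.length = .R) :
    valAt H s (h ++ [x]) = val H .L (picked s .L h) (insert x (picked s .R h)) := by
  simp [valAt, mover_succ, hm, picked_append_singleton, Player.other]

lemma valAt_append_singleton_le (hv : ValidHist H s (h ++ [x])) (hm : mover s h.length = .L) :
    valAt H s (h ++ [x]) ≤ valAt H s h := by
  obtain ⟨-, hend, hx⟩ := validHist_append_singleton_iff.mp hv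
  rw [valAt_append_singleton_of_L hm, valAt, hm]
  exact le_val_L (not_ended_iff.mp hend) (mem_free_picked.mpr hx)

lemma le_valAt_append_singleton (hv : ValidHist H s (h ++ [x])) (hm : mover s h.length = .R) :
    valAt H s h ≤ valAt H s (h ++ [x]) := by
  obtain ⟨-, hend, hx⟩ := validHist_append_singleton_iff.mp hv
  rw [valAt_append_singleton_of_R hm, valAt, hm]
  exact val_R_le (not_ended_iff.mp hend) (mem_free_picked.mpr hx)

lemma exists_valAt_append_singleton_eq (hv : ValidHist H s h) (hend : ¬ ended H s h)
    (hlen : h.length < H.V.card) :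
    ∃ x, (x ∈ H.V ∧ x ∉ h) ∧ valAt H s (h ++ [x]) = valAt H s h := by
  have hs := not_ended_iff.mp hend
  have hf := hv.free_picked_nonempty hlen
  cases hm : mover s h.length
  · obtain ⟨x, hx, heq⟩ := exists_val_L_eq hs hf
    exact ⟨x, mem_free_picked.mp hx, by rw [valAt_append_singleton_of_L hm, heq, valAt, hm]⟩
  · obtain ⟨x, hx, heq⟩ := exists_val_R_eq hs hf
    exact ⟨x, mem_free_picked.mp hx, by rw [valAt_append_singleton_of_R hm, heq, valAt, hm]⟩

lemma valAt_of_complete (hv : ValidHist H s h) (hc : Complete H s h) :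
    valAt H s h = score H (picked s .L h) (picked s .R h) := by
  rcases hc with hend | hlen
  · exact val_of_score_ne_one fun hs => not_ended_iff.mpr hs hend
  · exact val_of_free_eq_empty (hv.free_picked_eq_empty hlen)

def Secures : Player → ℕ → ℕ → Prop
  | .L, t, n => t ≤ n
  | .R, t, n => n ≤ t

def winVal : Player → ℕ
  | .L => 2
  | .R => 0

lemma Secures.valAt_append_singleton (hg : Secures p t (valAt H s h))
    (hv : ValidHist H s (h ++ [x])) (hm : mover s h.length ≠ p) :
    Secures p t (valAt H s (h ++ [x])) := by
  have hm' := Player.eq_other_of_ne hm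
  cases p
  · exact le_trans (α := ℕ) hg (le_valAt_append_singleton hv hm')
  · exact le_trans (α := ℕ) (valAt_append_singleton_le hv hm') hg

def Preserves (H : Game) (s p : Player) (σ : Strategy) (t : ℕ) : Prop :=
  ∀ h, ValidHist H s h → ¬ ended H s h → h.length < H.V.card → mover s h.length = p →
    Secures p t (valAt H s h) → Secures p t (valAt H s (h ++ [σ h]))

theorem Preserves.secures_valAt (hσ : Preserves H s p σ t) (h0 : Secures p t (val H s ∅ ∅)) :
    ∀ h, ValidHist H s h → Follows s p σ h → Secures p t (valAt H s h) := by
  intro h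
  induction h using List.reverseRecOn with
  | nil => exact fun _ _ => h0
  | append_singleton h x ih =>
    intro hv hf
    obtain ⟨hv', hend, -⟩ := validHist_append_singleton_iff.mp hv
    obtain ⟨hf', hx⟩ := follows_append_singleton_iff.mp hf
    have hg := ih hv' hf'
    by_cases hm : mover s h.length = p
    · have hlen := hv.length_le
      rw [List.length_append, List.length_singleton] at hlen
      rw [hx hm]
      exact hσ h hv' hend (by omega) hm hg
    · exact hg.valAt_append_singleton hv hm

theorem Preserves.fills_of_complete (hσ : Preserves H s p σ (winVal p))
    (h0 : Secures p (winVal p) (val H s ∅ ∅)) (h : List ℕ) (hv : ValidHist H s h)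
    (hf : Follows s p σ h) (hc : Complete H s h) : fills (H.edges p) (picked s p h) := by
  have hg := hσ.secures_valAt h0 h hv hf
  rw [valAt_of_complete hv hc] at hg
  cases p <;> simp only [Secures, winVal, score, Game.edges] at hg ⊢ <;> split_ifs at hg <;>
    first | assumption | omega

theorem Preserves.not_fills_of_complete (hER : ∅ ∉ H.ER) (hσ : Preserves H s p σ 1)
    (h0 : Secures p 1 (val H s ∅ ∅)) (h : List ℕ) (hv : ValidHist H s h)
    (hf : Follows s p σ h) (hc : Complete H s h) :
    ¬ fills (H.edges p.other) (picked s p.other h) := by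
  have hg := hσ.secures_valAt h0 h hv hf
  have hboth := hv.not_fills_both hER
  rw [valAt_of_complete hv hc] at hg
  cases p <;> simp only [Secures, score, Game.edges, Player.other] at hg ⊢ <;> split_ifs at hg <;>
    tauto

/-- An optimal strategy for whichever player is to move: it never changes the value. -/
noncomputable def optStrat (H : Game) (s : Player) : Strategy := fun h =>
  Classical.epsilon fun x => (x ∈ H.V ∧ x ∉ h) ∧ valAt H s (h ++ [x]) = valAt H s h

lemma optStrat_spec (hv : ValidHist H s h) (hend : ¬ ended H s h) (hlen : h.length < H.V.card) :
    (optStrat H s h ∈ H.V ∧ optStrat H s h ∉ h) ∧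
      valAt H s (h ++ [optStrat H s h]) = valAt H s h :=
  Classical.epsilon_spec (exists_valAt_append_singleton_eq hv hend hlen)

lemma legal_optStrat : Legal H s p (optStrat H s) :=
  fun _ hv _ hend hlen _ => (optStrat_spec hv hend hlen).1

lemma preserves_optStrat : Preserves H s p (optStrat H s) t :=
  fun _ hv hend hlen _ hg => by rwa [(optStrat_spec hv hend hlen).2]

theorem exists_complete_play {τ : Strategy} (hσ : Legal H s p σ)
    (hτ : Legal H s p.other τ) :
    ∃ h, ValidHist H s h ∧ Follows s p σ h ∧ Follows s p.other τ h ∧ Complete H s h := by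
  suffices ∀ k, ∃ h, ValidHist H s h ∧ Follows s p σ h ∧ Follows s p.other τ h ∧
      (Complete H s h ∨ k ≤ h.length) by
    obtain ⟨h, hv, hf, hf', hc⟩ := this (H.V.card + 1)
    exact ⟨h, hv, hf, hf', hc.resolve_right fun hk => by have := hv.length_le; omega⟩
  intro k
  induction k with
  | zero =>
    exact ⟨[], ⟨List.nodup_nil, by simp, by simp⟩, by simp [Follows], by simp [Follows],
      .inr le_rfl⟩
  | succ k ih =>
    obtain ⟨h, hv, hf, hf', hc⟩ := ih
    by_cases hcomp : Complete H s h
    · exact ⟨h, hv, hf, hf', .inl hcomp⟩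
    have hk := hc.resolve_left hcomp
    rw [Complete, not_or] at hcomp
    have hlen : h.length < H.V.card := lt_of_le_of_ne hv.length_le hcomp.2
    by_cases hm : mover s h.length = p
    · refine ⟨h ++ [σ h], validHist_append_singleton_iff.mpr
        ⟨hv, hcomp.1, hσ h hv hf hcomp.1 hlen hm⟩,
        follows_append_singleton_iff.mpr ⟨hf, fun _ => rfl⟩,
        follows_append_singleton_iff.mpr
          ⟨hf', fun hm' => absurd (hm.symm.trans hm') (Player.other_ne p).symm⟩,
        .inr (by simp; omega)⟩
    · have hm' := Player.eq_other_of_ne hm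
      refine ⟨h ++ [τ h], validHist_append_singleton_iff.mpr
        ⟨hv, hcomp.1, hτ h hv hf' hcomp.1 hlen hm'⟩,
        follows_append_singleton_iff.mpr ⟨hf, fun hm'' => absurd hm'' hm⟩,
        follows_append_singleton_iff.mpr ⟨hf', fun _ => rfl⟩, .inr (by simp; omega)⟩

end Play

section Adequacy
variable {H : Game} {s p : Player}

lemma secures_other_one {n : ℕ} (h : ¬ Secures p (winVal p) n) (hn : n ≤ 2) :
    Secures p.other 1 n := by
  cases p <;> simp only [Secures, winVal, Player.other] at h ⊢ <;> omega

lemma secures_other_winVal {n : ℕ} (h : ¬ Secures p 1 n) :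
    Secures p.other (winVal p.other) n := by
  cases p <;> simp only [Secures, winVal, Player.other] at h ⊢ <;> omega

/-- Against a winning strategy, an optimal opponent would otherwise secure a draw. -/
theorem WinsAs.secures (hER : ∅ ∉ H.ER) (hw : WinsAs H s p) :
    Secures p (winVal p) (val H s ∅ ∅) := by
  obtain ⟨σ, hσ, hwin⟩ := hw
  by_contra hns
  obtain ⟨h, hv, hf, hf', hc⟩ := exists_complete_play hσ (legal_optStrat (p := p.other))
  have := preserves_optStrat.not_fills_of_complete hER (secures_other_one hns val_le_two)
    h hv hf' hc
  rw [Player.other_other] at this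
  exact this (hwin h hv hf hc)

theorem NonLosingAs.secures (hn : NonLosingAs H s p) : Secures p 1 (val H s ∅ ∅) := by
  obtain ⟨σ, hσ, hnl⟩ := hn
  by_contra hns
  obtain ⟨h, hv, hf, hf', hc⟩ := exists_complete_play hσ (legal_optStrat (p := p.other))
  exact hnl h hv hf hc
    (preserves_optStrat.fills_of_complete (secures_other_winVal hns) h hv hf' hc)

theorem val_eq_of_resultIs (hER : ∅ ∉ H.ER) {r : Result} (hr : resultIs H s r) :
    r.val = val H s ∅ ∅ := by
  have : val H s ∅ ∅ ≤ 2 := val_le_two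
  cases r
  · have : 2 ≤ val H s ∅ ∅ := WinsAs.secures (p := .L) hER hr
    simp only [Result.val]; omega
  · have : 1 ≤ val H s ∅ ∅ := NonLosingAs.secures (p := .L) hr.1
    have : val H s ∅ ∅ ≤ 1 := NonLosingAs.secures (p := .R) hr.2
    simp only [Result.val]; omega
  · have : val H s ∅ ∅ ≤ 0 := WinsAs.secures (p := .R) hER hr
    simp only [Result.val]; omega

end Adequacy

noncomputable def greedyStrat (H : Game) (v : ℕ) : Strategy
  | [] => v
  | h@(_ :: _) => optStrat H .L h

lemma legal_greedyStrat {H : Game} {v : ℕ} (hv : v ∈ H.V) :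
    Legal H .L .L (greedyStrat H v) := by
  rintro (_ | ⟨y, h⟩) hvh - hend hlen -
  · exact ⟨hv, List.not_mem_nil⟩
  · exact (optStrat_spec hvh hend hlen).1

lemma preserves_greedyStrat {H : Game} {v : ℕ} (h1 : val H .L ∅ ∅ ≤ val H .R {v} ∅)
    (t : ℕ) :
    Preserves H .L .L (greedyStrat H v) t := by
  rintro (_ | ⟨y, h⟩) hvh hend hlen hm hg
  · have : valAt H .L [v] = val H .R {v} ∅ :=
      valAt_append_singleton_of_L (h := []) (mover_zero .L)
    exact le_trans (α := ℕ) hg (this ▸ h1)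
  · exact preserves_optStrat _ hvh hend hlen hm hg

/-- Greedy move: if there are no edges of size 1 and there is a blue edge `{u, v}` such
that every edge containing `u` also contains `v`, then picking `v` is an optimal first
move for Left, and `o(G) ≤_L o(G_v^u)`. -/
theorem greedy_move (G : Game) (hG : WellFormed G) (u v : ℕ)
    (hu : u ∈ G.V) (hv : v ∈ G.V)
    (hno1 : ∀ e ∈ G.EL ∪ G.ER, e.card ≠ 1)
    (he : ({u, v} : Finset ℕ) ∈ G.EL)
    (hdom : ∀ e ∈ G.EL ∪ G.ER, u ∈ e → v ∈ e) :
    (WinsAs G .L .L →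
      ∃ σ : Strategy, σ [] = v ∧ Legal G .L .L σ ∧
        ∀ h, ValidHist G .L h → Follows .L .L σ h → Complete G .L h →
          fills (G.edges .L) (picked .L .L h)) ∧
    (NonLosingAs G .L .L →
      ∃ σ : Strategy, σ [] = v ∧ Legal G .L .L σ ∧
        ∀ h, ValidHist G .L h → Follows .L .L σ h → Complete G .L h →
          ¬ fills (G.edges .R) (picked .L .R h)) ∧
    (∀ o o' : Outcome, hasOutcome G o → hasOutcome (updLR G v u) o' → outLE o o') := by
  have h2 : ∀ e ∈ G.EL ∪ G.ER, 2 ≤ e.card := fun e he' => by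
    have := card_pos.mpr ((mem_union.mp he').elim (hG.1 e · |>.2) (hG.2 e · |>.2))
    have := hno1 e he'
    omega
  have huv : u ≠ v := fun h => by simpa [h] using h2 _ (mem_union_left _ he)
  have hER : ∅ ∉ G.ER := fun h => by simpa using h2 ∅ (mem_union_right _ h)
  have hER' : ∅ ∉ (updLR G v u).ER :=
    empty_notMem_updLR_ER fun e he' => h2 e (mem_union_right _ he')
  have hgreedy := preserves_greedyStrat (val_L_le_val_R_singleton h2 he huv hu hv hdom)
  have hle (s : Player) : val G s ∅ ∅ ≤ val (updLR G v u) s ∅ ∅ := by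
    rw [val_updLR huv.symm s (notMem_empty u) (notMem_empty v)]
    exact val_le_val_insert_insert huv hdom s (by simpa) (by simpa)
  refine ⟨fun hw => ⟨greedyStrat G v, rfl, legal_greedyStrat hv,
      (hgreedy 2).fills_of_complete (hw.secures hER)⟩,
    fun hn => ⟨greedyStrat G v, rfl, legal_greedyStrat hv,
      (hgreedy 1).not_fills_of_complete hER hn.secures⟩,
    fun o o' ho ho' => ⟨?_, ?_⟩⟩
  · rw [val_eq_of_resultIs hER ho.1, val_eq_of_resultIs hER' ho'.1]
    exact hle .L
  · rw [val_eq_of_resultIs hER ho.2, val_eq_of_resultIs hER' ho'.2]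
    exact hle .R

end APG
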